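/- Let a, b ∈ ℝ with b² < a². Then there exist m, n ∈ ℝ such that the function F = G4 + m·C1 + n·C2 : ℝ^6 → ℝ has vanishing derivative at the equilibrium e = (0, 0, b, 0, 0, a), and the Hessian quadratic form of F at e is definite (either positive definite or negative definite) on the subspace W = {v ∈ ℝ^6 : dC1(e)(v) = 0 and dC2(e)(v) = 0}. (Hence F is a Lyapunov function proving the nonlinear stability of e.) -/

import Mathlib

noncomputable section

/-- Casimir `C1`. -/
def C1fun (p : Fin 6 → ℝ) : ℝ :=
  (p 0 ^ 2 + p 1 ^ 2 + p 2 ^ 2 + p 3 ^ 2 + p 4 ^ 2 + p 5 ^ 2) / 2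

/-- Casimir `C2`. -/
def C2fun (p : Fin 6 → ℝ) : ℝ := p 0 * p 3 + p 1 * p 4 + p 2 * p 5

/-- The constant of motion `G4`. -/
def G4fun (l1 l2 l3 l4 : ℝ) (p : Fin 6 → ℝ) : ℝ :=
  p 3 ^ 2 / (l4^2 - l1^2) + p 4 ^ 2 / (l4^2 - l2^2) + p 5 ^ 2 / (l4^2 - l3^2)

/-!
`G4 + m C1 + n C2` is a quadratic form `p ↦ B p p`, so its derivative at `q` is
`B q + B.flip q` and its Hessian is the constant form `B + B.flip`. Writing
`αᵢ = (λ₄² - λᵢ²)⁻¹`, criticality at `e` is a linear system for `(m, n)` with determinant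
`b² - a² ≠ 0`, solved by `m = -2 α₃ a² / (a² - b²)`, `n = 2 α₃ a b / (a² - b²)`. On `W` the
coordinates `x₃, y₃` vanish and the Hessian splits into the binary forms
`m xᵢ² + 2 n xᵢ yᵢ + (m + 2 αᵢ) yᵢ²`, `i = 1, 2`, with `m > 0` and determinant
`4 a² α₃ (α₃ - αᵢ) / (a² - b²) > 0`, because `λ₄² < λ₃² < λ₁², λ₂²` makes `α₃ < 0` and `α₃ < αᵢ`.
-/

section BilinearDiagonal

variable {𝕜 E F : Type*} [NontriviallyNormedField 𝕜] [NormedAddCommGroup E] [NormedSpace 𝕜 E]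
  [NormedAddCommGroup F] [NormedSpace 𝕜 F] (B : E →L[𝕜] E →L[𝕜] F)

theorem ContinuousLinearMap.hasFDerivAt_apply_self (x : E) :
    HasFDerivAt (fun y => B y y) (B x + B.flip x) x := by
  refine (B.hasFDerivAt_of_bilinear (hasFDerivAt_id x) (hasFDerivAt_id x)).congr_fderiv ?_
  ext v
  simp

theorem ContinuousLinearMap.fderiv_apply_self : fderiv 𝕜 (fun y => B y y) = ⇑(B + B.flip) :=
  funext fun x => (B.hasFDerivAt_apply_self x).fderiv

theorem ContinuousLinearMap.fderiv_fderiv_apply_self (x : E) :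
    fderiv 𝕜 (fderiv 𝕜 fun y => B y y) x = B + B.flip := by
  rw [B.fderiv_apply_self, ContinuousLinearMap.fderiv]

end BilinearDiagonal

theorem binary_quadratic_nonneg {m n c x y : ℝ} (hm : 0 < m) (hdet : 0 < m * c - n ^ 2) :
    0 ≤ m * x ^ 2 + 2 * n * x * y + c * y ^ 2 := by
  nlinarith [sq_nonneg (m * x + n * y), mul_nonneg hdet.le (sq_nonneg y)]

theorem binary_quadratic_pos {m n c x y : ℝ} (hm : 0 < m) (hdet : 0 < m * c - n ^ 2)
    (h : x ≠ 0 ∨ y ≠ 0) : 0 < m * x ^ 2 + 2 * n * x * y + c * y ^ 2 := by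
  have hc : 0 < c := by nlinarith [sq_nonneg n]
  rcases h with hx | hy
  · nlinarith [sq_nonneg (c * y + n * x), mul_pos hdet (pow_two_pos_of_ne_zero hx)]
  · nlinarith [sq_nonneg (m * x + n * y), mul_pos hdet (pow_two_pos_of_ne_zero hy)]

def lyapunovForm (α₁ α₂ α₃ m n : ℝ) : (Fin 6 → ℝ) →L[ℝ] (Fin 6 → ℝ) →L[ℝ] ℝ :=
  LinearMap.toContinuousBilinearMap <| LinearMap.mk₂ ℝ
    (fun p q => m / 2 * (p 0 * q 0 + p 1 * q 1 + p 2 * q 2 + p 3 * q 3 + p 4 * q 4 + p 5 * q 5)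
      + n * (p 0 * q 3 + p 1 * q 4 + p 2 * q 5) + α₁ * p 3 * q 3 + α₂ * p 4 * q 4 + α₃ * p 5 * q 5)
    (fun _ _ _ => by simp only [Pi.add_apply]; ring)
    (fun _ _ _ => by simp only [Pi.smul_apply, smul_eq_mul]; ring)
    (fun _ _ _ => by simp only [Pi.add_apply]; ring)
    (fun _ _ _ => by simp only [Pi.smul_apply, smul_eq_mul]; ring)

@[simp]
theorem lyapunovForm_apply (α₁ α₂ α₃ m n : ℝ) (p q : Fin 6 → ℝ) :
    lyapunovForm α₁ α₂ α₃ m n p q =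
      m / 2 * (p 0 * q 0 + p 1 * q 1 + p 2 * q 2 + p 3 * q 3 + p 4 * q 4 + p 5 * q 5)
      + n * (p 0 * q 3 + p 1 * q 4 + p 2 * q 5) + α₁ * p 3 * q 3 + α₂ * p 4 * q 4
      + α₃ * p 5 * q 5 :=
  rfl

theorem C1fun_eq_lyapunovForm : C1fun = fun p => lyapunovForm 0 0 0 1 0 p p := by
  ext p; simp only [C1fun, lyapunovForm_apply]; ring

theorem C2fun_eq_lyapunovForm : C2fun = fun p => lyapunovForm 0 0 0 0 1 p p := by
  ext p; simp only [C2fun, lyapunovForm_apply]; ring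

theorem G4fun_add_eq_lyapunovForm (l1 l2 l3 l4 m n : ℝ) :
    (fun p => G4fun l1 l2 l3 l4 p + m * C1fun p + n * C2fun p) =
      fun p =>
        lyapunovForm (l4 ^ 2 - l1 ^ 2)⁻¹ (l4 ^ 2 - l2 ^ 2)⁻¹ (l4 ^ 2 - l3 ^ 2)⁻¹ m n p p := by
  ext p; simp only [G4fun, C1fun, C2fun, lyapunovForm_apply]; ring

theorem lyapunovForm_symm_apply_equilibrium (α₁ α₂ α₃ m n a b : ℝ) (v : Fin 6 → ℝ) :
    (lyapunovForm α₁ α₂ α₃ m n + (lyapunovForm α₁ α₂ α₃ m n).flip) ![0, 0, b, 0, 0, a] v =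
      (m * b + n * a) * v 2 + (n * b + (m + 2 * α₃) * a) * v 5 := by
  simp only [add_apply, ContinuousLinearMap.flip_apply, lyapunovForm_apply, Matrix.cons_val_zero,
    Matrix.cons_val_one, Matrix.cons_val]
  ring

theorem lyapunovForm_symm_apply_self (α₁ α₂ α₃ m n : ℝ) (v : Fin 6 → ℝ) :
    (lyapunovForm α₁ α₂ α₃ m n + (lyapunovForm α₁ α₂ α₃ m n).flip) v v =
      (m * v 0 ^ 2 + 2 * n * v 0 * v 3 + (m + 2 * α₁) * v 3 ^ 2)
      + (m * v 1 ^ 2 + 2 * n * v 1 * v 4 + (m + 2 * α₂) * v 4 ^ 2)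
      + (m * v 2 ^ 2 + 2 * n * v 2 * v 5 + (m + 2 * α₃) * v 5 ^ 2) := by
  simp only [add_apply, ContinuousLinearMap.flip_apply, lyapunovForm_apply]
  ring

theorem lyapunovForm_symm_apply_self_pos {α₁ α₂ α₃ m n : ℝ} (hm : 0 < m)
    (hdet₁ : 0 < m * (m + 2 * α₁) - n ^ 2) (hdet₂ : 0 < m * (m + 2 * α₂) - n ^ 2)
    {v : Fin 6 → ℝ} (hv : v ≠ 0) (hv₂ : v 2 = 0) (hv₅ : v 5 = 0) :
    0 < (lyapunovForm α₁ α₂ α₃ m n + (lyapunovForm α₁ α₂ α₃ m n).flip) v v := by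
  have hne : (v 0 ≠ 0 ∨ v 3 ≠ 0) ∨ (v 1 ≠ 0 ∨ v 4 ≠ 0) := by
    by_contra! h
    exact hv (funext fun i => by fin_cases i <;> simp [*])
  have hQ₁ := binary_quadratic_nonneg (x := v 0) (y := v 3) hm hdet₁
  have hQ₂ := binary_quadratic_nonneg (x := v 1) (y := v 4) hm hdet₂
  rw [lyapunovForm_symm_apply_self, hv₂, hv₅]
  rcases hne with h | h
  · linarith [binary_quadratic_pos hm hdet₁ h]
  · linarith [binary_quadratic_pos hm hdet₂ h]

theorem eq_zero_and_eq_zero_of_sq_lt_sq {a b x y : ℝ} (hba : b ^ 2 < a ^ 2)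
    (h₁ : b * x + a * y = 0) (h₂ : a * x + b * y = 0) : x = 0 ∧ y = 0 := by
  have hd : a ^ 2 - b ^ 2 ≠ 0 := by linarith
  constructor
  · have : (a ^ 2 - b ^ 2) * x = 0 := by linear_combination a * h₂ - b * h₁
    exact (mul_eq_zero.mp this).resolve_left hd
  · have : (a ^ 2 - b ^ 2) * y = 0 := by linear_combination a * h₁ - b * h₂
    exact (mul_eq_zero.mp this).resolve_left hd

theorem exists_lyapunov_coeffs {α₁ α₂ α₃ a b : ℝ} (h₃ : α₃ < 0) (h₁ : α₃ < α₁) (h₂ : α₃ < α₂)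
    (hba : b ^ 2 < a ^ 2) :
    ∃ m n : ℝ, m * b + n * a = 0 ∧ n * b + (m + 2 * α₃) * a = 0 ∧ 0 < m ∧
      0 < m * (m + 2 * α₁) - n ^ 2 ∧ 0 < m * (m + 2 * α₂) - n ^ 2 := by
  have hd : 0 < a ^ 2 - b ^ 2 := by linarith
  have ha : 0 < a ^ 2 := by nlinarith [sq_nonneg b]
  -- the unique solution of the two linear equations, whose determinant is `b ^ 2 - a ^ 2`
  set m := -2 * α₃ * a ^ 2 / (a ^ 2 - b ^ 2)
  set n := 2 * α₃ * a * b / (a ^ 2 - b ^ 2)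
  have hdet : ∀ α, α₃ < α → 0 < m * (m + 2 * α) - n ^ 2 := by
    intro α hα
    have key : m * (m + 2 * α) - n ^ 2 = 4 * a ^ 2 * (α₃ * (α₃ - α)) / (a ^ 2 - b ^ 2) := by
      simp only [m, n]; field_simp; ring
    rw [key]
    exact div_pos (mul_pos (by positivity) (mul_pos_of_neg_of_neg h₃ (by linarith))) hd
  refine ⟨m, n, ?_, ?_, div_pos (by nlinarith) hd, hdet α₁ h₁, hdet α₂ h₂⟩
  · simp only [m, n]; field_simp; ring
  · simp only [m, n]; field_simp; ring

theorem inv_sub_lt_inv_sub {x y z : ℝ} (hxy : x < y) (hyz : y < z) : (x - y)⁻¹ < (x - z)⁻¹ :=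
  (inv_lt_inv_of_neg (by linarith) (by linarith)).2 (by linarith)

theorem G4_lyapunov_function_general
    (l1 l2 l3 l4 : ℝ) (h12 : l2 < l1) (h23 : l3 < l2) (h34 : l4 < l3)
    (s13 : 0 < l1 + l3) (s23 : 0 < l2 + l3) (s34 : 0 < l3 + l4)
    (a b : ℝ) (hba : b ^ 2 < a ^ 2) :
    ∃ m n : ℝ,
      fderiv ℝ (fun p => G4fun l1 l2 l3 l4 p + m * C1fun p + n * C2fun p)
          ![0, 0, b, 0, 0, a] = 0 ∧
      ((∀ v : Fin 6 → ℝ, v ≠ 0 →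
          fderiv ℝ C1fun ![0, 0, b, 0, 0, a] v = 0 →
          fderiv ℝ C2fun ![0, 0, b, 0, 0, a] v = 0 →
          0 < fderiv ℝ (fderiv ℝ (fun p => G4fun l1 l2 l3 l4 p + m * C1fun p + n * C2fun p))
                ![0, 0, b, 0, 0, a] v v) ∨
       (∀ v : Fin 6 → ℝ, v ≠ 0 →
          fderiv ℝ C1fun ![0, 0, b, 0, 0, a] v = 0 →
          fderiv ℝ C2fun ![0, 0, b, 0, 0, a] v = 0 →
          fderiv ℝ (fderiv ℝ (fun p => G4fun l1 l2 l3 l4 p + m * C1fun p + n * C2fun p))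
                ![0, 0, b, 0, 0, a] v v < 0)) := by
  have h43 : l4 ^ 2 < l3 ^ 2 := sq_lt_sq' (neg_lt_iff_pos_add'.2 s34) h34
  have h31 : l3 ^ 2 < l1 ^ 2 := sq_lt_sq' (neg_lt_iff_pos_add'.2 s13) (h23.trans h12)
  have h32 : l3 ^ 2 < l2 ^ 2 := sq_lt_sq' (neg_lt_iff_pos_add'.2 s23) h23
  obtain ⟨m, n, hb, ha, hm, hdet₁, hdet₂⟩ := exists_lyapunov_coeffs
    (inv_lt_zero.2 (sub_neg.2 h43)) (inv_sub_lt_inv_sub h43 h31) (inv_sub_lt_inv_sub h43 h32) hba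
  refine ⟨m, n, ?_, Or.inl fun v hv hC1 hC2 => ?_⟩
  · rw [G4fun_add_eq_lyapunovForm, ContinuousLinearMap.fderiv_apply_self]
    ext v
    rw [lyapunovForm_symm_apply_equilibrium, hb, ha, zero_apply]
    ring
  · rw [C1fun_eq_lyapunovForm, ContinuousLinearMap.fderiv_apply_self,
      lyapunovForm_symm_apply_equilibrium] at hC1
    rw [C2fun_eq_lyapunovForm, ContinuousLinearMap.fderiv_apply_self,
      lyapunovForm_symm_apply_equilibrium] at hC2
    obtain ⟨hv₂, hv₅⟩ := eq_zero_and_eq_zero_of_sq_lt_sq (x := v 2) (y := v 5) hba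
      (by linear_combination hC1) (by linear_combination hC2)
    rw [G4fun_add_eq_lyapunovForm, ContinuousLinearMap.fderiv_fderiv_apply_self]
    exact lyapunovForm_symm_apply_self_pos hm hdet₁ hdet₂ hv hv₂ hv₅

/-- `G4 + m C1 + n C2` is a Lyapunov function for the equilibrium
`(0,0,b,0,0,a)`: its derivative vanishes there, and its Hessian is definite
(positive or negative) on `W = ker dC1(e) ∩ ker dC2(e)`. -/
theorem G4_lyapunov_function
    (l1 l2 l3 l4 : ℝ) (h12 : l2 < l1) (h23 : l3 < l2) (h34 : l4 < l3)
    (s12 : 0 < l1 + l2) (s13 : 0 < l1 + l3) (s14 : 0 < l1 + l4)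
    (s23 : 0 < l2 + l3) (s24 : 0 < l2 + l4) (s34 : 0 < l3 + l4)
    (a b : ℝ) (hba : b ^ 2 < a ^ 2) :
    ∃ m n : ℝ,
      fderiv ℝ (fun p => G4fun l1 l2 l3 l4 p + m * C1fun p + n * C2fun p)
          ![0, 0, b, 0, 0, a] = 0 ∧
      ((∀ v : Fin 6 → ℝ, v ≠ 0 →
          fderiv ℝ C1fun ![0, 0, b, 0, 0, a] v = 0 →
          fderiv ℝ C2fun ![0, 0, b, 0, 0, a] v = 0 →
          0 < fderiv ℝ (fderiv ℝ (fun p => G4fun l1 l2 l3 l4 p + m * C1fun p + n * C2fun p))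
                ![0, 0, b, 0, 0, a] v v) ∨
       (∀ v : Fin 6 → ℝ, v ≠ 0 →
          fderiv ℝ C1fun ![0, 0, b, 0, 0, a] v = 0 →
          fderiv ℝ C2fun ![0, 0, b, 0, 0, a] v = 0 →
          fderiv ℝ (fderiv ℝ (fun p => G4fun l1 l2 l3 l4 p + m * C1fun p + n * C2fun p))
                ![0, 0, b, 0, 0, a] v v < 0)) :=
  G4_lyapunov_function_general l1 l2 l3 l4 h12 h23 h34 s13 s23 s34 a b hba
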